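/- The rewriting system generated by the moves α_i on binary trees is confluent, with the left comb I_n as the unique normal form among trees with n leaves. -/

import Mathlib

/-- Binary trees: expressions in a category with multiplication. -/
inductive BT : Type
  | leaf : BT
  | node : BT → BT → BT
deriving DecidableEq

namespace BT

/-- number of leaves (variables) of an expression -/
def leaves : BT → ℕ
  | leaf => 1
  | node l r => leaves l + leaves r

/-- `stab i t` is `t` right-stabilized `i` times: `(t ⊗_i I)`. -/
def stab : ℕ → BT → BT
  | 0, t => t
  | n+1, t => node (stab n t) leaf

/-- semi-normalized: of the form `(F ⊗ I)` -/
def IsSemi (t : BT) : Prop := ∃ f, t = node f leaf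

/-- fully normalized: a left comb, i.e. an iterated right stabilization of `I` -/
def IsComb (t : BT) : Prop := ∃ n, t = stab n leaf

/-- The move `α_i`: `α_0` reassociates `(H ⊗ (K ⊗ L))` to `((H ⊗ K) ⊗ L)` at the
root, and `α_{i+1} (N ⊗ I) = (α_i N) ⊗ I`. -/
inductive Alpha : ℕ → BT → BT → Prop
  | base (H K L : BT) : Alpha 0 (node H (node K L)) (node (node H K) L)
  | step {i N N'} : Alpha i N N' → Alpha (i+1) (node N leaf) (node N' leaf)

end BT

/-- one rewriting step: some move `α_i` applies -/
def BT.Step (E F : BT) : Prop := ∃ i, BT.Alpha i E F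

/-!
Every move preserves the number of leaves, and every tree `H ⊗ K` can be driven by `α_0`
moves to the semi-normalized form `N ⊗ I`: rotate the right spine of `K` onto the left.
Normalizing `N` recursively under `α_{i+1}` then brings every tree with `n` leaves to the
left comb `I_n`, which gives confluence. A tree admitting no move has no right factor of
the form `K ⊗ L` at any level of its left spine, so it is a left comb.
-/

namespace BT

open Relation

lemma one_le_leaves (E : BT) : 1 ≤ E.leaves := by
  induction E with
  | leaf => exact le_rfl
  | node l r ihl _ => simp only [leaves]; omega

@[simp]
lemma leaves_stab_leaf (n : ℕ) : (stab n leaf).leaves = n + 1 := by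
  induction n with
  | zero => rfl
  | succ n ih => simp only [stab, leaves, ih]

lemma Alpha.leaves_eq {i : ℕ} {E F : BT} (h : Alpha i E F) : F.leaves = E.leaves := by
  induction h with
  | base H K L => simp only [leaves]; ring
  | step _ ih => simp only [leaves, ih]

lemma leaves_eq_of_reflTransGen {E F : BT} (h : ReflTransGen Step E F) :
    F.leaves = E.leaves := by
  induction h with
  | refl => rfl
  | tail _ hstep ih => obtain ⟨i, hα⟩ := hstep; rw [hα.leaves_eq, ih]

lemma Step.node_leaf {N N' : BT} (h : Step N N') : Step (node N leaf) (node N' leaf) :=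
  let ⟨i, hα⟩ := h; ⟨i + 1, .step hα⟩

lemma reflTransGen_node_leaf {N N' : BT} (h : ReflTransGen Step N N') :
    ReflTransGen Step (node N leaf) (node N' leaf) :=
  ReflTransGen.lift (fun N => node N leaf) (fun _ _ => Step.node_leaf) _ _ h

lemma exists_reflTransGen_semi (H K : BT) :
    ∃ N, ReflTransGen Step (node H K) (node N leaf) ∧ N.leaves + 1 = H.leaves + K.leaves := by
  induction K generalizing H with
  | leaf => exact ⟨H, .refl, rfl⟩
  | node K L _ ihL =>
    obtain ⟨N, hN, hleaves⟩ := ihL (node H K)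
    refine ⟨N, .head ⟨0, .base H K L⟩ hN, ?_⟩
    simp only [leaves] at hleaves ⊢
    omega

lemma reflTransGen_stab (E : BT) : ReflTransGen Step E (stab (E.leaves - 1) leaf) := by
  match E with
  | leaf => exact .refl
  | node H K =>
    obtain ⟨N, hN, hleaves⟩ := exists_reflTransGen_semi H K
    have hNE : N.leaves < (node H K).leaves := by simp only [leaves]; omega
    have hcomb : stab (N.leaves - 1 + 1) leaf = stab ((node H K).leaves - 1) leaf := by
      have := one_le_leaves N
      congr 1; simp only [leaves]; omega
    exact hN.trans (hcomb ▸ reflTransGen_node_leaf (reflTransGen_stab N))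
termination_by E.leaves

lemma not_alpha_stab_leaf (n i : ℕ) (F : BT) : ¬Alpha i (stab n leaf) F := by
  induction n generalizing i F with
  | zero => rintro ⟨⟩
  | succ n ih => rintro (_ | ⟨hα⟩); exact ih _ _ hα

lemma isComb_of_forall_not_alpha {E : BT} (h : ∀ i F, ¬Alpha i E F) : IsComb E := by
  induction E with
  | leaf => exact ⟨0, rfl⟩
  | node H K ihH _ =>
    cases K with
    | node K L => exact absurd (.base H K L) (h 0 _)
    | leaf =>
      obtain ⟨n, rfl⟩ := ihH fun i F hα => h (i + 1) _ hα.step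
      exact ⟨n + 1, rfl⟩

lemma IsComb.eq_stab {E : BT} (h : IsComb E) : E = stab (E.leaves - 1) leaf := by
  obtain ⟨n, rfl⟩ := h
  simp

end BT

/-- The rewriting system generated by the `α_i` is confluent, and the left
combs are exactly the normal forms: a tree admits no move iff it is the left
comb on its number of leaves. -/
theorem alpha_confluent_unique_normal_form :
    (∀ E F G : BT, Relation.ReflTransGen BT.Step E F →
      Relation.ReflTransGen BT.Step E G →
        ∃ H, Relation.ReflTransGen BT.Step F H ∧
          Relation.ReflTransGen BT.Step G H) ∧
    (∀ E : BT, (∀ i F, ¬ BT.Alpha i E F) ↔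
      E = BT.stab (E.leaves - 1) BT.leaf) := by
  refine ⟨fun E F G hF hG => ⟨BT.stab (E.leaves - 1) BT.leaf, ?_, ?_⟩, fun E => ⟨?_, ?_⟩⟩
  · simpa only [BT.leaves_eq_of_reflTransGen hF] using BT.reflTransGen_stab F
  · simpa only [BT.leaves_eq_of_reflTransGen hG] using BT.reflTransGen_stab G
  · exact fun h => (BT.isComb_of_forall_not_alpha h).eq_stab
  · intro h
    rw [h]
    exact BT.not_alpha_stab_leaf _
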